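/- Let x be a rational with convergents h_j/k_j, and fix even j with partial quotient b_{j+2} ≥ 4 of x. If an integer g with 1 ≤ g < b_{j+2} satisfies x − (h_j + g·h_{j+1})/(k_j + g·k_{j+1}) < 1/(k_j + g·k_{j+1})², then g = 1 or g = b_{j+2} − 1. -/

import Mathlib

/-!
Write `t` for the complete quotient of `x` at position `j + 2`, so that `t ≥ b_{j+2}` and
`x = (t h_{j+1} + h_j) / (t k_{j+1} + k_j)`. For even `j` the determinant identity
`h_{j+1} k_j - h_j k_{j+1} = 1` gives, with `q = k_j + g k_{j+1}`,
`x - (h_j + g h_{j+1}) / q = (t - g) / ((t k_{j+1} + k_j) q)`.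
If `2 ≤ g ≤ t - 2`, then
`(t - g) q - (t k_{j+1} + k_j) = (t - g - 1) k_j + ((g - 1)(t - g) - g) k_{j+1} ≥ 0`,
so the error is at least `1 / q²`.
-/

def cfVal : ℤ → List ℤ → ℚ
  | b0, [] => (b0 : ℚ)
  | b0, b :: bs => (b0 : ℚ) + (cfVal b bs)⁻¹

def cnum (l : List ℤ) : ℕ → ℤ
  | 0 => 1
  | 1 => l.getD 0 0
  | n + 2 => l.getD (n + 1) 0 * cnum l (n + 1) + cnum l n

def cden (l : List ℤ) : ℕ → ℤ
  | 0 => 0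
  | 1 => 1
  | n + 2 => l.getD (n + 1) 0 * cden l (n + 1) + cden l n

/-- The complete quotient `[b_{n+1}; b_{n+2}, …]` of `cfVal b0 bs`. -/
def completeQuot (bs : List ℤ) (n : ℕ) : ℚ :=
  cfVal (bs.getD n 0) (bs.drop (n + 1))

lemma cnum_mul_cden_sub_cnum_mul_cden (l : List ℤ) (n : ℕ) :
    cnum l (n + 2) * cden l (n + 1) - cnum l (n + 1) * cden l (n + 2) = (-1) ^ n := by
  induction n with
  | zero =>
    simp only [cnum, cden]
    ring
  | succ n ih =>
    change (l.getD (n + 2) 0 * cnum l (n + 2) + cnum l (n + 1)) * cden l (n + 2) -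
      cnum l (n + 2) * (l.getD (n + 2) 0 * cden l (n + 2) + cden l (n + 1)) = _
    rw [pow_succ]
    linear_combination -ih

lemma add_inv_mobius {α : Type*} [Field α] (a v H h K k : α) (hv : v ≠ 0) :
    ((a + v⁻¹) * H + h) / ((a + v⁻¹) * K + k) =
      (v * (a * H + h) + H) / (v * (a * K + k) + K) := by
  rw [← mul_div_mul_right _ _ hv]
  congr 1 <;> field_simp <;> ring

section ContinuedFraction

variable {bs : List ℤ}

lemma le_cfVal (hpos : ∀ b ∈ bs, 1 ≤ b) (b0 : ℤ) : (b0 : ℚ) ≤ cfVal b0 bs := by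
  induction bs generalizing b0 with
  | nil => simp [cfVal]
  | cons c bs ih =>
    have hc : (1 : ℚ) ≤ c := by exact_mod_cast hpos c List.mem_cons_self
    have hv : (1 : ℚ) ≤ cfVal c bs := hc.trans (ih (fun b hb ↦ hpos b (.tail _ hb)) c)
    have : 0 ≤ (cfVal c bs)⁻¹ := inv_nonneg.2 (by linarith)
    simp only [cfVal]
    linarith

lemma one_le_getD (hpos : ∀ b ∈ bs, 1 ≤ b) {n : ℕ} (hn : n < bs.length) :
    1 ≤ bs.getD n 0 := by
  rw [List.getD_eq_getElem _ _ hn]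
  exact hpos _ (List.getElem_mem hn)

lemma getD_le_completeQuot (hpos : ∀ b ∈ bs, 1 ≤ b) (n : ℕ) :
    (bs.getD n 0 : ℚ) ≤ completeQuot bs n :=
  le_cfVal (fun b hb ↦ hpos b (List.mem_of_mem_drop hb)) _

lemma one_le_completeQuot (hpos : ∀ b ∈ bs, 1 ≤ b) {n : ℕ} (hn : n < bs.length) :
    1 ≤ completeQuot bs n :=
  le_trans (by exact_mod_cast one_le_getD hpos hn) (getD_le_completeQuot hpos n)

lemma completeQuot_eq_add_inv {n : ℕ} (hn : n + 1 < bs.length) :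
    completeQuot bs n = bs.getD n 0 + (completeQuot bs (n + 1))⁻¹ := by
  rw [completeQuot, List.drop_eq_getElem_cons hn, ← List.getD_eq_getElem _ 0 hn]
  rfl

lemma one_le_cden_succ (b0 : ℤ) (hpos : ∀ b ∈ bs, 1 ≤ b) :
    ∀ n ≤ bs.length, 1 ≤ cden (b0 :: bs) (n + 1)
  | 0, _ => le_rfl
  | m + 1, hm => by
    have ha : 1 ≤ (b0 :: bs).getD (m + 1) 0 := by
      rw [List.getD_cons_succ]
      exact one_le_getD hpos (by omega)
    have hk : 1 ≤ cden (b0 :: bs) (m + 1) := one_le_cden_succ b0 hpos m (by omega)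
    have hk' : 0 ≤ cden (b0 :: bs) m := by
      cases m with
      | zero => exact le_rfl
      | succ m => exact zero_le_one.trans (one_le_cden_succ b0 hpos m (by omega))
    show 1 ≤ (b0 :: bs).getD (m + 1) 0 * cden (b0 :: bs) (m + 1) + cden (b0 :: bs) m
    nlinarith

lemma cfVal_eq_completeQuot_div (b0 : ℤ) (hpos : ∀ b ∈ bs, 1 ≤ b) :
    ∀ n < bs.length, cfVal b0 bs =
      (completeQuot bs n * cnum (b0 :: bs) (n + 1) + cnum (b0 :: bs) n) /
        (completeQuot bs n * cden (b0 :: bs) (n + 1) + cden (b0 :: bs) n) := by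
  intro n hn
  induction n with
  | zero =>
    obtain ⟨c, bs', rfl⟩ : ∃ c bs', bs = c :: bs' := List.exists_cons_of_length_pos hn
    have hv : completeQuot (c :: bs') 0 ≠ 0 :=
      (one_pos.trans_le (one_le_completeQuot hpos hn)).ne'
    rw [completeQuot, List.getD_cons_zero, List.drop_one, List.tail_cons] at hv ⊢
    simp only [cfVal, cnum, cden, List.getD_cons_zero, Int.cast_one, Int.cast_zero, mul_one,
      add_zero]
    field_simp
  | succ n ih =>
    have hv : completeQuot bs (n + 1) ≠ 0 := (one_pos.trans_le (one_le_completeQuot hpos hn)).ne'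
    rw [ih (by omega), completeQuot_eq_add_inv hn, add_inv_mobius _ _ _ _ _ _ hv]
    simp only [cnum, cden, List.getD_cons_succ, Int.cast_add, Int.cast_mul]

end ContinuedFraction

lemma inv_sq_le_sub_semiconvergent {α : Type*} [Field α] [LinearOrder α] [IsStrictOrderedRing α]
    {t g h H k K : α} (hdet : H * k - h * K = 1) (hk : 0 ≤ k) (hK : 0 < K) (hg : 2 ≤ g)
    (hgt : g + 2 ≤ t) :
    1 / (k + g * K) ^ 2 ≤ (t * H + h) / (t * K + k) - (h + g * H) / (k + g * K) := by
  have hq : 0 < k + g * K := by nlinarith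
  have hD : 0 < t * K + k := by nlinarith
  have herr : (t * H + h) / (t * K + k) - (h + g * H) / (k + g * K) =
      (t - g) / ((t * K + k) * (k + g * K)) := by
    rw [div_sub_div _ _ hD.ne' hq.ne']
    congr 1
    linear_combination (t - g) * hdet
  rw [herr, div_le_div_iff₀ (by positivity) (by positivity), one_mul, sq, ← mul_assoc]
  refine mul_le_mul_of_nonneg_right ?_ hq.le
  have hA : 0 ≤ (t - g - 1) * k := mul_nonneg (by linarith) hk
  have hB : 0 ≤ ((g - 1) * (t - g) - g) * K := mul_nonneg (by nlinarith) hK.le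
  linear_combination hA + hB

theorem stmt_8_general (b0 : ℤ) (bs : List ℤ) (hpos : ∀ b ∈ bs, 1 ≤ b)
    (x : ℚ) (hx : x = cfVal b0 bs)
    (j : ℕ) (hjeven : Even j) (hj : j + 2 ≤ bs.length)
    (b : ℤ) (hb : b = (b0 :: bs).getD (j + 2) 0)
    (g : ℤ) (hg1 : 1 ≤ g) (hgb : g < b)
    (hineq : x - ((cnum (b0 :: bs) (j + 1) + g * cnum (b0 :: bs) (j + 2) : ℤ) : ℚ) /
        ((cden (b0 :: bs) (j + 1) + g * cden (b0 :: bs) (j + 2) : ℤ) : ℚ) <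
      1 / ((cden (b0 :: bs) (j + 1) + g * cden (b0 :: bs) (j + 2) : ℤ) : ℚ) ^ 2) :
    g = 1 ∨ g = b - 1 := by
  by_contra! hg
  have hg2 : (2 : ℚ) ≤ g := by exact_mod_cast (show 2 ≤ g by omega)
  have hgt : (g : ℚ) + 2 ≤ completeQuot bs (j + 1) := by
    have hgb2 : (g : ℚ) + 2 ≤ b := by exact_mod_cast (show g + 2 ≤ b by omega)
    rw [hb, List.getD_cons_succ] at hgb2
    exact hgb2.trans (getD_le_completeQuot hpos _)
  have hdet : (cnum (b0 :: bs) (j + 2) : ℚ) * cden (b0 :: bs) (j + 1) -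
      cnum (b0 :: bs) (j + 1) * cden (b0 :: bs) (j + 2) = 1 := by
    exact_mod_cast (cnum_mul_cden_sub_cnum_mul_cden _ j).trans hjeven.neg_one_pow
  have hk : (1 : ℚ) ≤ cden (b0 :: bs) (j + 1) := by
    exact_mod_cast one_le_cden_succ b0 hpos j (by omega)
  have hK : (1 : ℚ) ≤ cden (b0 :: bs) (j + 2) := by
    exact_mod_cast one_le_cden_succ b0 hpos (j + 1) (by omega)
  have hlow := inv_sq_le_sub_semiconvergent hdet (by linarith) (by linarith) hg2 hgt
  rw [hx, cfVal_eq_completeQuot_div b0 hpos (j + 1) (by omega)] at hineq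
  push_cast at hineq
  exact hlow.not_gt hineq

/-- Here `j : ℕ` is even, `b = b_{j+2}` is the `(j+2)`-nd partial quotient, and the convergents
`h_j/k_j` are encoded with the index shift `h_j = cnum l (j+1)`, `k_j = cden l (j+1)`. -/
theorem stmt_8 (b0 : ℤ) (bs : List ℤ) (hpos : ∀ b ∈ bs, 1 ≤ b)
    (x : ℚ) (hx : x = cfVal b0 bs)
    (j : ℕ) (hjeven : Even j) (hj : j + 2 ≤ bs.length)
    (b : ℤ) (hb : b = (b0 :: bs).getD (j + 2) 0) (hb4 : 4 ≤ b)
    (g : ℤ) (hg1 : 1 ≤ g) (hgb : g < b)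
    (hineq : x - ((cnum (b0 :: bs) (j + 1) + g * cnum (b0 :: bs) (j + 2) : ℤ) : ℚ) /
        ((cden (b0 :: bs) (j + 1) + g * cden (b0 :: bs) (j + 2) : ℤ) : ℚ) <
      1 / ((cden (b0 :: bs) (j + 1) + g * cden (b0 :: bs) (j + 2) : ℤ) : ℚ) ^ 2) :
    g = 1 ∨ g = b - 1 :=
  stmt_8_general b0 bs hpos x hx j hjeven hj b hb g hg1 hgb hineq
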